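/- arXiv:2101.07237 — 8 statements merged into one kernel-verified Lean document; each statement's English description precedes it below -/
import Mathlib

section
/- From any Crosswise AND position B with n columns, every sequence of consecutive feasible moves has length at most the number of columns of B that contain a true entry, hence at most n; consequently the game tree of Transverse Wave on an m-by-n grid has height at most n. -/
open scoped Classical

noncomputable section

namespace TW

variable {ι κ : Type*}

/-- A column `j` of a Crosswise AND position is feasible if it contains a `true` (green) entry. -/
def Feasible (B : ι → κ → Bool) (j : κ) : Prop := ∃ i, B i j = true

/-- The Crosswise AND move at column `j`: if `B i j = false` then row `i` becomes all false;
otherwise row `i` is unchanged except that entry `(i, j)` becomes false. -/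
def move (B : ι → κ → Bool) (j : κ) : ι → κ → Bool :=
  fun i j' => if B i j = false then false else if j' = j then false else B i j'

/-- Playing a sequence of columns in order. -/
def playSeq {m n : ℕ} (B : Fin m → Fin n → Bool) : List (Fin n) → (Fin m → Fin n → Bool)
  | [] => B
  | j :: js => playSeq (move B j) js

/-- A list of columns is a sequence of consecutive feasible moves from `B`. -/
def FeasibleSeq {m n : ℕ} (B : Fin m → Fin n → Bool) : List (Fin n) → Prop
  | [] => True
  | j :: js => Feasible B j ∧ FeasibleSeq (move B j) js

/-- from any Crosswise AND position `B` with `n` columns, every sequence of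
consecutive feasible moves has length at most the number of columns of `B` containing a
true entry, hence at most `n`; so the game tree of Transverse Wave on an `m × n` grid has
height at most `n`. -/
theorem stmt1 {m n : ℕ} (B : Fin m → Fin n → Bool) (js : List (Fin n))
    (hjs : FeasibleSeq B js) :
    js.length ≤ (Finset.univ.filter fun j : Fin n => ∃ i, B i j = true).card ∧
    js.length ≤ n := by
  have hmain : js.length ≤
      (Finset.univ.filter fun j : Fin n => ∃ i, B i j = true).card := by
    induction js generalizing B with
    | nil => simp
    | cons j js ih =>
      obtain ⟨⟨i0, hi0⟩, htail⟩ := hjs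
      have hsub : (Finset.univ.filter fun j' : Fin n => ∃ i, move B j i j' = true) ⊂
          (Finset.univ.filter fun j' : Fin n => ∃ i, B i j' = true) := by
        constructor
        · intro j' hj'
          simp only [Finset.mem_filter, Finset.mem_univ, true_and] at hj' ⊢
          obtain ⟨i, hi⟩ := hj'
          simp only [move] at hi
          split at hi
          · exact absurd hi (by simp)
          · split at hi
            · exact absurd hi (by simp)
            · exact ⟨i, hi⟩
        · intro hle
          have hj : j ∈ (Finset.univ.filter fun j' : Fin n => ∃ i, B i j' = true) := by
            simp only [Finset.mem_filter, Finset.mem_univ, true_and]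
            exact ⟨i0, hi0⟩
          have := hle hj
          simp only [Finset.mem_filter, Finset.mem_univ, true_and] at this
          obtain ⟨i, hi⟩ := this
          simp [move] at hi
      have hcard := Finset.card_lt_card hsub
      have := ih (move B j) htail
      simp only [List.length_cons]
      omega
  refine ⟨hmain, hmain.trans ?_⟩
  calc (Finset.univ.filter fun j : Fin n => ∃ i, B i j = true).card
      ≤ (Finset.univ : Finset (Fin n)).card := Finset.card_filter_le _ _
    _ = n := Finset.card_univ.trans (Fintype.card_fin n)

end TW
end
end

section
/- For every Boolean matrix B : Fin m → Fin n → Bool, the Crosswise AND game on B is isomorphic (as a game tree, via the identity map on columns) to the Crosswise OR game on the entrywise negation of B; in particular the two games have the same Grundy value and the same outcome. Hence Transverse Wave, Crosswise AND and Crosswise OR are pairwise isomorphic games. -/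
open scoped Classical

noncomputable section

namespace TW

variable {ι κ : Type*}

def trueCount [Fintype ι] [Fintype κ] (B : ι → κ → Bool) : ℕ :=
  (Finset.univ.filter fun p : ι × κ => B p.1 p.2 = true).card

theorem move_true_of {B : ι → κ → Bool} {j : κ} {i : ι} {j' : κ}
    (h : move B j i j' = true) : B i j' = true := by
  unfold move at h
  split_ifs at h <;> simp_all

theorem trueCount_move_lt [Fintype ι] [Fintype κ] {B : ι → κ → Bool} {j : κ}
    (h : Feasible B j) : trueCount (move B j) < trueCount B := by
  obtain ⟨i, hi⟩ := h
  apply Finset.card_lt_card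
  refine (Finset.ssubset_iff_of_subset ?_).mpr ?_
  · intro p hp
    simp only [Finset.mem_filter, Finset.mem_univ, true_and] at hp ⊢
    exact move_true_of hp
  · refine ⟨(i, j), ?_, ?_⟩
    · simp [hi]
    · simp [move, hi]

/-- minimum excludant of a finite set of naturals -/
def mex (s : Finset ℕ) : ℕ := sInf {n : ℕ | n ∉ s}

/-- The Grundy value of a Crosswise AND (Transverse Wave) position:
the mex of the Grundy values of the options. -/
def grundy [Fintype ι] [Fintype κ] (B : ι → κ → Bool) : ℕ :=
  mex (((Finset.univ.filter fun j : κ => Feasible B j).attach).image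
    fun j => grundy (move B j.1))
termination_by trueCount B
decreasing_by
  exact trueCount_move_lt (Finset.mem_filter.mp j.2).2

/-- Normal-play outcome: the position is a first-player win (an N-position). -/
def FirstWins [Fintype ι] [Fintype κ] (B : ι → κ → Bool) : Prop :=
  ∃ j, ∃ _ : Feasible B j, ¬ FirstWins (move B j)
termination_by trueCount B
decreasing_by
  rename_i h
  exact trueCount_move_lt h

/-- A column `j` of a Crosswise OR position is feasible if it contains a `false` entry. -/
def coFeasible (C : ι → κ → Bool) (j : κ) : Prop := ∃ i, C i j = false

/-- The Crosswise OR move at column `j`: if `C i j = true` then row `i` becomes all true;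
otherwise row `i` is unchanged except that entry `(i, j)` becomes true. -/
def coMove (C : ι → κ → Bool) (j : κ) : ι → κ → Bool :=
  fun i j' => if C i j = true then true else if j' = j then true else C i j'

def falseCount [Fintype ι] [Fintype κ] (C : ι → κ → Bool) : ℕ :=
  (Finset.univ.filter fun p : ι × κ => C p.1 p.2 = false).card

theorem coMove_false_of {C : ι → κ → Bool} {j : κ} {i : ι} {j' : κ}
    (h : coMove C j i j' = false) : C i j' = false := by
  unfold coMove at h
  split_ifs at h <;> simp_all

theorem falseCount_coMove_lt [Fintype ι] [Fintype κ] {C : ι → κ → Bool} {j : κ}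
    (h : coFeasible C j) : falseCount (coMove C j) < falseCount C := by
  obtain ⟨i, hi⟩ := h
  apply Finset.card_lt_card
  refine (Finset.ssubset_iff_of_subset ?_).mpr ?_
  · intro p hp
    simp only [Finset.mem_filter, Finset.mem_univ, true_and] at hp ⊢
    exact coMove_false_of hp
  · refine ⟨(i, j), ?_, ?_⟩
    · simp [hi]
    · simp [coMove, hi]

/-- The Grundy value of a Crosswise OR position. -/
def coGrundy [Fintype ι] [Fintype κ] (C : ι → κ → Bool) : ℕ :=
  mex (((Finset.univ.filter fun j : κ => coFeasible C j).attach).image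
    fun j => coGrundy (coMove C j.1))
termination_by falseCount C
decreasing_by
  exact falseCount_coMove_lt (Finset.mem_filter.mp j.2).2

/-- Normal-play outcome for Crosswise OR: the position is a first-player win. -/
def coFirstWins [Fintype ι] [Fintype κ] (C : ι → κ → Bool) : Prop :=
  ∃ j, ∃ _ : coFeasible C j, ¬ coFirstWins (coMove C j)
termination_by falseCount C
decreasing_by
  rename_i h
  exact falseCount_coMove_lt h

theorem neg_move_eq (B : ι → κ → Bool) (j : κ) :
    (fun i j' => !(move B j i j')) = coMove (fun i j' => !(B i j')) j := by
  funext i j'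
  simp only [move, coMove]
  cases h : B i j <;> simp [h] <;> split_ifs <;> simp

theorem feasible_iff_neg (B : ι → κ → Bool) (j : κ) :
    Feasible B j ↔ coFeasible (fun i j' => !(B i j')) j := by
  simp [Feasible, coFeasible]

theorem grundy_neg [Fintype ι] [Fintype κ] (B : ι → κ → Bool) :
    grundy B = coGrundy (fun i j' => !(B i j')) := by
  rw [grundy, coGrundy]
  congr 1
  ext a
  simp only [Finset.mem_image, Finset.mem_attach, true_and, Subtype.exists,
    Finset.mem_filter, Finset.mem_univ]
  constructor
  · rintro ⟨j, hf, rfl⟩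
    refine ⟨j, (feasible_iff_neg B j).mp hf, ?_⟩
    have := grundy_neg (move B j)
    rw [neg_move_eq] at this
    exact this.symm
  · rintro ⟨j, hf', rfl⟩
    have hf : Feasible B j := (feasible_iff_neg B j).mpr hf'
    refine ⟨j, hf, ?_⟩
    have := grundy_neg (move B j)
    rw [neg_move_eq] at this
    exact this
termination_by trueCount B
decreasing_by
  · exact trueCount_move_lt hf
  · exact trueCount_move_lt hf

theorem firstWins_neg [Fintype ι] [Fintype κ] (B : ι → κ → Bool) :
    FirstWins B ↔ coFirstWins (fun i j' => !(B i j')) := by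
  rw [FirstWins, coFirstWins]
  constructor
  · rintro ⟨j, hf, hw⟩
    refine ⟨j, (feasible_iff_neg B j).mp hf, ?_⟩
    have := firstWins_neg (move B j)
    rw [neg_move_eq] at this
    exact fun h => hw (this.mpr h)
  · rintro ⟨j, hf', hw⟩
    have hf : Feasible B j := (feasible_iff_neg B j).mpr hf'
    refine ⟨j, hf, ?_⟩
    have := firstWins_neg (move B j)
    rw [neg_move_eq] at this
    exact fun h => hw (this.mp h)
termination_by trueCount B
decreasing_by
  · exact trueCount_move_lt hf
  · exact trueCount_move_lt hf

/-- for every Boolean matrix `B`, Crosswise AND on `B` is isomorphic, via the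
identity map on columns, to Crosswise OR on the entrywise negation of `B`: a column is
feasible in one game iff it is feasible in the other, and (entrywise) negation intertwines
the two move operations (so, recursively, the two game trees are isomorphic); in
particular the two games have the same Grundy value and the same outcome.  Hence
Transverse Wave, Crosswise AND and Crosswise OR are pairwise isomorphic games. -/
theorem stmt2 {m n : ℕ} (B : Fin m → Fin n → Bool) :
    (∀ j, Feasible B j ↔ coFeasible (fun i j' => !(B i j')) j) ∧
    (∀ j, Feasible B j →
      (fun i j' => !(move B j i j')) = coMove (fun i j' => !(B i j')) j) ∧
    grundy B = coGrundy (fun i j' => !(B i j')) ∧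
    (FirstWins B ↔ coFirstWins (fun i j' => !(B i j'))) := by
  exact ⟨feasible_iff_neg B, fun j _ => neg_move_eq B j, grundy_neg B, firstWins_neg B⟩

end TW
end
end

section
/- Node-Kayles reduces to Friend Circle: let G₀ = (V₀, E₀) be a finite simple graph, and build the Friend Circle position (G, S, w) where G has vertex set V₀ together with a new vertex t_v for each v ∈ V₀, edge set E₀ together with the edges (v, t_v) for each v ∈ V₀, labels w(e) = true for e ∈ E₀ and w((v, t_v)) = false for all v ∈ V₀, and seed set S = V₀. Then Friend Circle on (G, S, w) is isomorphic (as a game tree, via the move correspondence v ↔ v) to Node-Kayles on G₀; in particular the first player wins Friend Circle on (G, S, w) if and only if the first player wins Node-Kayles on G₀. -/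
/-!
The labelling `nkLabel A` encodes the Node-Kayles position with available set `A`: the edge
`(v, t_v)` is false exactly while `v` is available. Only the vertices of `G₀` are seeds, and
`(v, t_v)` is the only edge at `v` that can be false, so `v` is a feasible Friend Circle move
iff it is available in Node-Kayles. Playing `v` makes every edge at `v` true and, since the
edges of `G₀` are all true, every edge at every neighbour of `v` as well: this removes exactly
the closed neighbourhood of `v` from the available set.
-/

open scoped Classical

noncomputable section

namespace TW

variable {ι κ : Type*}

/-- A vertex `v` is a feasible Friend Circle move for position `(G, S, w)` if `v` is a
seed and some edge of `G` incident to `v` is labelled false. -/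
def fcFeasible {V : Type*} (G : SimpleGraph V) (S : Finset V) (w : Sym2 V → Bool)
    (v : V) : Prop :=
  v ∈ S ∧ ∃ x, G.Adj v x ∧ w s(v, x) = false

/-- The Friend Circle move at `v`: every edge incident to `v` becomes true, and every
edge incident to a neighbour `x` of `v` whose edge `(v, x)` was already true becomes
true; all other edge labels are unchanged (labels of non-edges are never changed). -/
def fcMove {V : Type*} (G : SimpleGraph V) (w : Sym2 V → Bool) (v : V) :
    Sym2 V → Bool :=
  fun e =>
    if e ∈ G.edgeSet ∧ (v ∈ e ∨ ∃ x ∈ e, G.Adj v x ∧ w s(v, x) = true) then true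
    else w e

/-- The set of false-labelled edges of `G`. -/
def falseEdges {V : Type*} [Fintype V] [DecidableEq V] (G : SimpleGraph V)
    (w : Sym2 V → Bool) : Finset (Sym2 V) :=
  Finset.univ.filter fun e => e ∈ G.edgeSet ∧ w e = false

theorem fcMove_false_of {V : Type*} {G : SimpleGraph V} {w : Sym2 V → Bool} {v : V}
    {e : Sym2 V} (h : fcMove G w v e = false) : w e = false := by
  unfold fcMove at h
  split_ifs at h <;> simp_all

theorem falseEdges_fcMove_lt {V : Type*} [Fintype V] [DecidableEq V]
    {G : SimpleGraph V} {S : Finset V} {w : Sym2 V → Bool} {v : V}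
    (h : fcFeasible G S w v) :
    (falseEdges G (fcMove G w v)).card < (falseEdges G w).card := by
  obtain ⟨-, x, hadj, hw⟩ := h
  apply Finset.card_lt_card
  refine (Finset.ssubset_iff_of_subset ?_).mpr ?_
  · intro e he
    simp only [falseEdges, Finset.mem_filter, Finset.mem_univ, true_and] at he ⊢
    exact ⟨he.1, fcMove_false_of he.2⟩
  · refine ⟨s(v, x), ?_, ?_⟩
    · simp [falseEdges, SimpleGraph.mem_edgeSet, hadj, hw]
    · simp [falseEdges, fcMove, SimpleGraph.mem_edgeSet, hadj]

/-- Normal-play outcome for Friend Circle: the position is a first-player win. -/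
def fcFirstWins {V : Type*} [Fintype V] [DecidableEq V] (G : SimpleGraph V)
    (S : Finset V) (w : Sym2 V → Bool) : Prop :=
  ∃ v, ∃ _ : fcFeasible G S w v, ¬ fcFirstWins G S (fcMove G w v)
termination_by (falseEdges G w).card
decreasing_by
  rename_i h
  exact falseEdges_fcMove_lt h

/-- Normal-play outcome for Node-Kayles on `G₀` with remaining (available) vertices `A`:
a move selects `v ∈ A` and removes `v` and all its neighbours from `A`. -/
def nkFirstWins {V₀ : Type*} [Fintype V₀] (G₀ : SimpleGraph V₀) (A : Finset V₀) : Prop :=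
  ∃ v, ∃ _ : v ∈ A, ¬ nkFirstWins G₀ (A \ insert v (Finset.univ.filter (G₀.Adj v)))
termination_by A.card
decreasing_by
  rename_i hv
  apply Finset.card_lt_card
  exact (Finset.ssubset_iff_of_subset Finset.sdiff_subset).mpr ⟨v, hv, by simp⟩

/-- The graph of the reduction from Node-Kayles on `G₀` to Friend Circle: the vertices of
`G₀` (as `Sum.inl`) together with a new vertex `t_v = Sum.inr v` for each `v`, with the
edges of `G₀` together with the edges `(v, t_v)`. -/
def FCgraph {V₀ : Type*} (G₀ : SimpleGraph V₀) : SimpleGraph (V₀ ⊕ V₀) where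
  Adj a b := match a, b with
    | .inl u, .inl v => G₀.Adj u v
    | .inl u, .inr v => u = v
    | .inr u, .inl v => u = v
    | .inr _, .inr _ => False
  symm := by
    constructor
    rintro (u | u) (v | v) h
    · exact G₀.adj_symm h
    · exact h.symm
    · exact h.symm
    · exact h.elim
  loopless := by
    constructor
    rintro (u | u) h
    · exact G₀.irrefl h
    · exact h.elim

/-- The initial labelling of the reduction: the edges of `G₀` are true, the edges
`(v, t_v)` are false. -/
def FCw {V₀ : Type*} : Sym2 (V₀ ⊕ V₀) → Bool :=
  fun e => if ∀ a ∈ e, a.isLeft then true else false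

/-- The labelling corresponding to the Node-Kayles position with available vertex set
`A`: edges of `G₀` are true, and the edge `(v, t_v)` is true exactly when `v ∉ A`. -/
def nkLabel {V₀ : Type*} (A : Finset V₀) : Sym2 (V₀ ⊕ V₀) → Bool :=
  fun e =>
    if (∀ a ∈ e, a.isLeft) ∨ (∃ u, u ∉ A ∧ e = s(Sum.inl u, Sum.inr u)) then true
    else false


theorem fcMove_of_not_mem_edgeSet {V : Type*} {G : SimpleGraph V} {w : Sym2 V → Bool} {v : V}
    {e : Sym2 V} (he : e ∉ G.edgeSet) : fcMove G w v e = w e := by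
  simp [fcMove, he]

theorem fcMove_eq_true_of_eq_true {V : Type*} {G : SimpleGraph V} {w : Sym2 V → Bool} {v : V}
    {e : Sym2 V} (he : w e = true) : fcMove G w v e = true := by
  unfold fcMove
  split_ifs <;> simp [he]

theorem fcMove_eq_true_iff {V : Type*} {G : SimpleGraph V} {w : Sym2 V → Bool} {v : V}
    {e : Sym2 V} (he : e ∈ G.edgeSet) :
    fcMove G w v e = true ↔ w e = true ∨ v ∈ e ∨ ∃ x ∈ e, G.Adj v x ∧ w s(v, x) = true := by
  unfold fcMove
  split_ifs with h
  · simp only [true_iff]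
    exact Or.inr h.2
  · simp only [he, true_and] at h
    simp [h]

theorem fcFirstWins_iff {V : Type*} [Fintype V] [DecidableEq V] {G : SimpleGraph V}
    {S : Finset V} {w : Sym2 V → Bool} :
    fcFirstWins G S w ↔ ∃ v, fcFeasible G S w v ∧ ¬ fcFirstWins G S (fcMove G w v) := by
  rw [fcFirstWins]
  simp only [exists_prop]

theorem nkFirstWins_iff {V₀ : Type*} [Fintype V₀] [DecidableEq V₀] {G₀ : SimpleGraph V₀}
    {A : Finset V₀} :
    nkFirstWins G₀ A ↔
      ∃ v ∈ A, ¬ nkFirstWins G₀ (A \ insert v (Finset.univ.filter (G₀.Adj v))) := by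
  rw [nkFirstWins]
  simp only [exists_prop]
  -- `nkFirstWins` was elaborated with the classical `DecidableEq` instance
  congr!

namespace FCgraph

variable {V₀ : Type*} {G₀ : SimpleGraph V₀} {u u' : V₀}

@[simp]
theorem adj_inl_inl : (FCgraph G₀).Adj (.inl u) (.inl u') ↔ G₀.Adj u u' := Iff.rfl

@[simp]
theorem adj_inl_inr : (FCgraph G₀).Adj (.inl u) (.inr u') ↔ u = u' := Iff.rfl

@[simp]
theorem not_adj_inr_inr : ¬ (FCgraph G₀).Adj (.inr u) (.inr u') := id

end FCgraph

section Labelling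

variable {V₀ : Type*} (A : Finset V₀) (u u' : V₀)

@[simp]
theorem nkLabel_inl_inl : nkLabel A s(.inl u, .inl u') = true := by
  simp [nkLabel]

@[simp]
theorem nkLabel_inr_inr : nkLabel A s(.inr u, .inr u') = false := by
  simp [nkLabel]

@[simp]
theorem nkLabel_inl_inr : nkLabel A s(.inl u, .inr u') = true ↔ u = u' ∧ u ∉ A := by
  simp only [nkLabel, Sym2.mem_iff, Sum.forall, Sym2.eq_iff]
  aesop

theorem nkLabel_univ [Fintype V₀] : nkLabel (Finset.univ : Finset V₀) = FCw := by
  funext e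
  simp [nkLabel, FCw]

end Labelling

section Reduction

variable {V₀ : Type*} [Fintype V₀] [DecidableEq V₀] {G₀ : SimpleGraph V₀}

theorem fcFeasible_inl_iff (A : Finset V₀) (v : V₀) :
    fcFeasible (FCgraph G₀) (Finset.univ.image Sum.inl) (nkLabel A) (Sum.inl v) ↔ v ∈ A := by
  simp [fcFeasible, Sum.exists, ← Bool.not_eq_true]

theorem not_fcFeasible_inr (A : Finset V₀) (v : V₀) :
    ¬ fcFeasible (FCgraph G₀) (Finset.univ.image Sum.inl) (nkLabel A) (Sum.inr v) := by
  simp [fcFeasible]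

theorem fcMove_nkLabel (A : Finset V₀) (v : V₀) :
    fcMove (FCgraph G₀) (nkLabel A) (Sum.inl v)
      = nkLabel (A \ insert v (Finset.univ.filter (G₀.Adj v))) := by
  have pendant_edge (u u' : V₀) : fcMove (FCgraph G₀) (nkLabel A) (.inl v) s(.inl u, .inr u') =
      nkLabel (A \ insert v (Finset.univ.filter (G₀.Adj v))) s(.inl u, .inr u') := by
    by_cases huu : u = u'
    · subst huu
      rw [Bool.eq_iff_iff, fcMove_eq_true_iff (by simp), nkLabel_inl_inr, nkLabel_inl_inr]
      simp only [Sym2.mem_iff, exists_eq_or_imp, exists_eq_left, Sum.inl.injEq,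
        FCgraph.adj_inl_inl, FCgraph.adj_inl_inr, nkLabel_inl_inl, nkLabel_inl_inr,
        Finset.mem_sdiff, Finset.mem_insert, Finset.mem_filter, Finset.mem_univ, true_and]
      tauto
    · rw [fcMove_of_not_mem_edgeSet (by simpa), Bool.eq_iff_iff]
      simp [huu]
  funext e
  induction e using Sym2.ind with
  | h a b =>
    rcases a with u | u <;> rcases b with u' | u'
    · simp [fcMove_eq_true_of_eq_true]
    · exact pendant_edge u u'
    · rw [Sym2.eq_swap]
      exact pendant_edge u' u
    · rw [fcMove_of_not_mem_edgeSet (by simp)]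
      simp

theorem fcFirstWins_nkLabel_iff (A : Finset V₀) :
    fcFirstWins (FCgraph G₀) (Finset.univ.image Sum.inl) (nkLabel A) ↔ nkFirstWins G₀ A := by
  induction A using Finset.strongInduction with
  | H A ih =>
    rw [fcFirstWins_iff, nkFirstWins_iff, Sum.exists]
    simp only [fcFeasible_inl_iff, not_fcFeasible_inr, false_and, exists_false, or_false]
    refine exists_congr fun v => and_congr_right fun hv => ?_
    have hlt : A \ insert v (Finset.univ.filter (G₀.Adj v)) ⊂ A :=
      (Finset.ssubset_iff_of_subset Finset.sdiff_subset).mpr ⟨v, hv, by simp⟩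
    rw [fcMove_nkLabel A v, ih _ hlt]

end Reduction

/-- Node-Kayles on `G₀` is isomorphic, via the move correspondence
`v ↔ v` (i.e. `v ↔ Sum.inl v`), to Friend Circle on the constructed position
`(FCgraph G₀, S = V₀, FCw)`: under the state correspondence `A ↔ nkLabel A` (with the
initial position `Finset.univ ↔ FCw`), a vertex `v` is a feasible Node-Kayles move iff
`Sum.inl v` is a feasible Friend Circle move (and no other Friend Circle move is
feasible), and the two move operations commute with the correspondence; in particular the
first player wins Friend Circle on `(FCgraph G₀, V₀, FCw)` iff the first player wins
Node-Kayles on `G₀`. -/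
theorem stmt8 {V₀ : Type*} [Fintype V₀] [DecidableEq V₀] (G₀ : SimpleGraph V₀) :
    nkLabel (Finset.univ : Finset V₀) = FCw ∧
    (∀ (A : Finset V₀) (v : V₀),
      fcFeasible (FCgraph G₀) (Finset.univ.image Sum.inl) (nkLabel A) (Sum.inl v) ↔ v ∈ A) ∧
    (∀ (A : Finset V₀) (v : V₀),
      ¬ fcFeasible (FCgraph G₀) (Finset.univ.image Sum.inl) (nkLabel A) (Sum.inr v)) ∧
    (∀ (A : Finset V₀) (v : V₀), v ∈ A →
      fcMove (FCgraph G₀) (nkLabel A) (Sum.inl v)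
        = nkLabel (A \ insert v (Finset.univ.filter (G₀.Adj v)))) ∧
    (fcFirstWins (FCgraph G₀) (Finset.univ.image Sum.inl) FCw ↔
      nkFirstWins G₀ Finset.univ) := by
  refine ⟨nkLabel_univ, fcFeasible_inl_iff, not_fcFeasible_inr,
    fun A v _ => fcMove_nkLabel A v, ?_⟩
  rw [← nkLabel_univ]
  exact fcFirstWins_nkLabel_iff Finset.univ

end TW
end
end

section
/- Deleting all-false rows does not change the game: for every Crosswise AND position B, the Crosswise AND game on B is isomorphic (as a game tree, via the identity map on columns) to the Crosswise AND game on the matrix obtained from B by deleting every row all of whose entries are false. (This is the 'numerical interpretation' of collapses: replacing a collapsed realization of Demi-Quantum Boolean Nim by an all-zero realization, or deleting it, yields the same game; hence Demi-Quantum Boolean Nim with deletion of collapsed realizations is isomorphic to Crosswise AND, i.e., to Transverse Wave.) -/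
open scoped Classical

noncomputable section

namespace TW

variable {ι κ : Type*}

/-- `TreeEq B C` says that the Crosswise AND games on `B` and `C` (same column set,
possibly different row sets) have isomorphic game trees via the identity map on columns:
a column is feasible in `B` iff it is feasible in `C`, and, recursively, the positions
reached by moving at any feasible column again have isomorphic game trees. -/
def TreeEq {ι ι' κ : Type*} [Fintype ι] [Fintype ι'] [Fintype κ]
    (B : ι → κ → Bool) (C : ι' → κ → Bool) : Prop :=
  ∀ j : κ, (Feasible B j ↔ Feasible C j) ∧
    ∀ _ : Feasible B j, TreeEq (move B j) (move C j)
termination_by trueCount B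
decreasing_by
  rename_i h
  exact trueCount_move_lt h

theorem aux {ι κ : Type*} [Fintype ι] [Fintype κ] (B : ι → κ → Bool) (p : ι → Prop)
    (hp : ∀ i, (∃ j, B i j = true) → p i) :
    TreeEq B (fun i : {i // p i} => B i.1) := by
  rw [TreeEq]
  intro j
  constructor
  · constructor
    · rintro ⟨i, hi⟩
      exact ⟨⟨i, hp i ⟨j, hi⟩⟩, hi⟩
    · rintro ⟨i, hi⟩
      exact ⟨i.1, hi⟩
  · intro hj
    have := aux (move B j) p (fun i hi => hp i ⟨hi.choose, move_true_of hi.choose_spec⟩)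
    exact this
termination_by trueCount B
decreasing_by
  exact trueCount_move_lt hj

/-- deleting all-false rows does not change the game: Crosswise AND on `B`
is isomorphic, as a game tree via the identity map on columns, to Crosswise AND on the
matrix obtained from `B` by deleting every row all of whose entries are false.  (This is
the `numerical interpretation' of collapses of Demi-Quantum Boolean Nim: deleting a
collapsed realization, or keeping it as an all-zero realization, yields the same game.) -/
theorem stmt10 {m n : ℕ} (B : Fin m → Fin n → Bool) :
    TreeEq B (fun i : {i : Fin m // ¬ ∀ j, B i j = false} => B i.1) := by
  convert aux B (fun i => ¬ ∀ j, B i j = false)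
    (fun i hi h => by obtain ⟨j, hj⟩ := hi; rw [h j] at hj; exact Bool.false_ne_true hj)

end TW
end
end

section
/- From matrices to Avoid True: let B : Fin m → Fin n → Bool be a Crosswise AND (Demi-Quantum Boolean Nim) position. Over variables x₁, …, xₙ, define the positive CNF F_B whose clauses are C_i = { x_j : B i j = false } for i = 1, …, m. Then the Crosswise AND game on B is isomorphic (as a game tree, via the move correspondence column j ↔ variable x_j) to the Avoid True game on position (F_B, ∅); in particular the two games have the same Grundy value and outcome. -/
open scoped Classical

noncomputable section

namespace TW

variable {ι κ : Type*}

/-- A variable `x` is a feasible Avoid True move for `(F, T)` if `x ∉ T` and making all of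
`T ∪ {x}` true does not make the positive CNF `F` true, i.e. some clause of `F` is
disjoint from `T ∪ {x}`. -/
def atFeasible {V : Type*} [DecidableEq V] (F : Finset (Finset V)) (T : Finset V)
    (x : V) : Prop :=
  x ∉ T ∧ ∃ C ∈ F, C ∩ insert x T = ∅

theorem insert_measure_lt {V : Type*} [Fintype V] [DecidableEq V] {T : Finset V} {x : V}
    (hx : x ∉ T) :
    (Finset.univ \ insert x T).card < (Finset.univ \ T).card := by
  apply Finset.card_lt_card
  refine (Finset.ssubset_iff_of_subset
    (Finset.sdiff_subset_sdiff (le_refl _) (Finset.subset_insert x T))).mpr ?_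
  exact ⟨x, by simp [hx], by simp⟩

/-- The Grundy value of an Avoid True position. -/
def atGrundy {V : Type*} [Fintype V] [DecidableEq V] (F : Finset (Finset V))
    (T : Finset V) : ℕ :=
  mex (((Finset.univ.filter fun x => atFeasible F T x).attach).image
    fun x => atGrundy F (insert x.1 T))
termination_by (Finset.univ \ T).card
decreasing_by
  exact insert_measure_lt ((Finset.mem_filter.mp x.2).2).1

/-- Normal-play outcome for Avoid True: the position is a first-player win. -/
def atFirstWins {V : Type*} [Fintype V] [DecidableEq V] (F : Finset (Finset V))
    (T : Finset V) : Prop :=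
  ∃ x, ∃ _ : atFeasible F T x, ¬ atFirstWins F (insert x T)
termination_by (Finset.univ \ T).card
decreasing_by
  rename_i h
  exact insert_measure_lt h.1

/-- `CAATEq B F T` says that the Crosswise AND game on `B` and the Avoid True game on
`(F, T)` have isomorphic game trees via the move correspondence `column j ↔ variable j`. -/
def CAATEq {ι κ : Type*} [Fintype ι] [Fintype κ] [DecidableEq κ]
    (B : ι → κ → Bool) (F : Finset (Finset κ)) (T : Finset κ) : Prop :=
  ∀ j : κ, (Feasible B j ↔ atFeasible F T j) ∧
    ∀ _ : Feasible B j, CAATEq (move B j) F (insert j T)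
termination_by trueCount B
decreasing_by
  rename_i h
  exact trueCount_move_lt h

/-- Invariant relating a current matrix `B` to the original matrix `B₀` and the
set `T` of columns already played. -/
def MatchB (B₀ B : ι → κ → Bool) (T : Finset κ) : Prop :=
  ∀ i j, B i j = true ↔ B₀ i j = true ∧ j ∉ T ∧ ∀ j' ∈ T, B₀ i j' = true

theorem feas_iff [Fintype ι] [Fintype κ] [DecidableEq κ] {B₀ B : ι → κ → Bool} {T : Finset κ}
    (h : MatchB B₀ B T) (j : κ) :
    Feasible B j ↔ atFeasible (Finset.univ.image fun i : ι =>
      Finset.univ.filter fun j' : κ => B₀ i j' = false) T j := by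
  constructor
  · rintro ⟨i, hi⟩
    obtain ⟨h1, h2, h3⟩ := (h i j).mp hi
    refine ⟨h2, Finset.univ.filter fun j' => B₀ i j' = false,
      Finset.mem_image_of_mem _ (Finset.mem_univ i), ?_⟩
    rw [Finset.eq_empty_iff_forall_notMem]
    intro y hy
    simp only [Finset.mem_inter, Finset.mem_filter, Finset.mem_univ, true_and,
      Finset.mem_insert] at hy
    rcases hy with ⟨hyf, rfl | hyT⟩
    · simp [h1] at hyf
    · simp [h3 y hyT] at hyf
  · rintro ⟨hjT, C, hC, hCE⟩
    obtain ⟨i, -, rfl⟩ := Finset.mem_image.mp hC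
    rw [Finset.eq_empty_iff_forall_notMem] at hCE
    refine ⟨i, (h i j).mpr ⟨?_, hjT, ?_⟩⟩
    · by_contra hb
      simp only [Bool.not_eq_true] at hb
      exact hCE j (Finset.mem_inter.mpr ⟨Finset.mem_filter.mpr ⟨Finset.mem_univ j, hb⟩,
        Finset.mem_insert_self j T⟩)
    · intro y hy
      by_contra hb
      simp only [Bool.not_eq_true] at hb
      exact hCE y (Finset.mem_inter.mpr ⟨Finset.mem_filter.mpr ⟨Finset.mem_univ y, hb⟩,
        Finset.mem_insert_of_mem hy⟩)

theorem notmem_of_feas [DecidableEq κ] {B₀ B : ι → κ → Bool} {T : Finset κ}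
    (h : MatchB B₀ B T) {j : κ} (hf : Feasible B j) : j ∉ T := by
  obtain ⟨i, hi⟩ := hf
  exact ((h i j).mp hi).2.1

theorem move_match [DecidableEq κ] {B₀ B : ι → κ → Bool} {T : Finset κ}
    (h : MatchB B₀ B T) {j : κ} (hj : j ∉ T) :
    MatchB B₀ (move B j) (insert j T) := by
  intro i j'
  unfold move
  constructor
  · intro hm
    split_ifs at hm with h1 h2
    obtain ⟨a1, a2, a3⟩ := (h i j').mp hm
    have hBj : B i j = true := by simpa using h1
    obtain ⟨b1, b2, b3⟩ := (h i j).mp hBj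
    refine ⟨a1, by simp [a2, h2], ?_⟩
    intro y hy
    rcases Finset.mem_insert.mp hy with rfl | hy
    · exact b1
    · exact a3 y hy
  · rintro ⟨a1, a2, a3⟩
    have hj'j : j' ≠ j := fun e => a2 (e ▸ Finset.mem_insert_self j T)
    have hj'T : j' ∉ T := fun e => a2 (Finset.mem_insert_of_mem e)
    have hBj : B i j = true := (h i j).mpr ⟨a3 j (Finset.mem_insert_self j T), hj,
      fun y hy => a3 y (Finset.mem_insert_of_mem hy)⟩
    rw [if_neg (by simp [hBj]), if_neg hj'j]
    exact (h i j').mpr ⟨a1, hj'T, fun y hy => a3 y (Finset.mem_insert_of_mem hy)⟩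

theorem main_caat [Fintype ι] [Fintype κ] [DecidableEq κ] {B₀ : ι → κ → Bool}
    (B : ι → κ → Bool) (T : Finset κ) (h : MatchB B₀ B T) :
    CAATEq B (Finset.univ.image fun i : ι =>
      Finset.univ.filter fun j' : κ => B₀ i j' = false) T := by
  rw [CAATEq]
  intro j
  refine ⟨feas_iff h j, fun hf => ?_⟩
  exact main_caat (move B j) (insert j T) (move_match h (notmem_of_feas h hf))
termination_by trueCount B
decreasing_by exact trueCount_move_lt hf

theorem main_grundy [Fintype ι] [Fintype κ] [DecidableEq κ] {B₀ : ι → κ → Bool}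
    (B : ι → κ → Bool) (T : Finset κ) (h : MatchB B₀ B T) :
    grundy B = atGrundy (Finset.univ.image fun i : ι =>
      Finset.univ.filter fun j' : κ => B₀ i j' = false) T := by
  rw [grundy, atGrundy]
  congr 1
  ext a
  simp only [Finset.mem_image, Finset.mem_attach, true_and, Subtype.exists,
    Finset.mem_filter, Finset.mem_univ]
  constructor
  · rintro ⟨j, hj, rfl⟩
    exact ⟨j, (feas_iff h j).mp hj,
      (main_grundy (move B j) (insert j T) (move_match h (notmem_of_feas h hj))).symm⟩
  · rintro ⟨j, hj, rfl⟩
    have hf : Feasible B j := (feas_iff h j).mpr hj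
    exact ⟨j, hf,
      main_grundy (move B j) (insert j T) (move_match h (notmem_of_feas h hf))⟩
termination_by trueCount B
decreasing_by
  · exact trueCount_move_lt hj
  · exact trueCount_move_lt hf

theorem main_fw [Fintype ι] [Fintype κ] [DecidableEq κ] {B₀ : ι → κ → Bool}
    (B : ι → κ → Bool) (T : Finset κ) (h : MatchB B₀ B T) :
    FirstWins B ↔ atFirstWins (Finset.univ.image fun i : ι =>
      Finset.univ.filter fun j' : κ => B₀ i j' = false) T := by
  rw [FirstWins, atFirstWins]
  constructor
  · rintro ⟨j, hf, hn⟩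
    exact ⟨j, (feas_iff h j).mp hf, fun hw => hn
      ((main_fw (move B j) (insert j T) (move_match h (notmem_of_feas h hf))).mpr hw)⟩
  · rintro ⟨j, hj, hn⟩
    have hf : Feasible B j := (feas_iff h j).mpr hj
    exact ⟨j, hf, fun hw => hn
      ((main_fw (move B j) (insert j T) (move_match h (notmem_of_feas h hf))).mp hw)⟩
termination_by trueCount B
decreasing_by
  · exact trueCount_move_lt hf
  · exact trueCount_move_lt hf

/-- for a Crosswise AND (Demi-Quantum Boolean Nim) position `B`, the
Crosswise AND game on `B` is isomorphic, via the move correspondence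
`column j ↔ variable x_j`, to the Avoid True game on `(F_B, ∅)` where `F_B` has one
clause per row `i`, namely `C_i = {j | B i j = false}`; in particular the two games have
the same Grundy value and the same outcome. -/
theorem stmt11 {m n : ℕ} (B : Fin m → Fin n → Bool) :
    CAATEq B (Finset.univ.image fun i : Fin m =>
      Finset.univ.filter fun j : Fin n => B i j = false) ∅ ∧
    grundy B = atGrundy (Finset.univ.image fun i : Fin m =>
      Finset.univ.filter fun j : Fin n => B i j = false) ∅ ∧
    (FirstWins B ↔ atFirstWins (Finset.univ.image fun i : Fin m =>
      Finset.univ.filter fun j : Fin n => B i j = false) ∅) := by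
  have h : MatchB B B ∅ := fun i j => by simp
  exact ⟨main_caat B ∅ h, main_grundy B ∅ h, main_fw B ∅ h⟩

end TW
end
end

section
/- From Avoid True to matrices: let (F, T) be an Avoid True position over a finite variable set V. Define the Boolean matrix B with rows indexed by the clauses C ∈ F satisfying C ∩ T = ∅ (the clauses not yet made true) and columns indexed by V, where B[C, x] = false if x ∈ C or x ∈ T, and B[C, x] = true otherwise. Then the Avoid True game on (F, T) is isomorphic (as a game tree, via the move correspondence variable x ↔ column x) to the Crosswise AND game on B; in particular the two games have the same Grundy value and outcome. Together with the converse reduction, Avoid True and Demi-Quantum Boolean Nim (Crosswise AND, Transverse Wave) are isomorphic games. -/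
open scoped Classical

noncomputable section

namespace TW

variable {ι κ : Type*}

/-- `ATCAEq F T B` says that the Avoid True game on `(F, T)` and the Crosswise AND game
on `B` have isomorphic game trees via the move correspondence `variable x ↔ column x`. -/
def ATCAEq {V ι : Type*} [Fintype V] [DecidableEq V] [Fintype ι]
    (F : Finset (Finset V)) (T : Finset V) (B : ι → V → Bool) : Prop :=
  ∀ x : V, (atFeasible F T x ↔ Feasible B x) ∧
    ∀ _ : atFeasible F T x, ATCAEq F (insert x T) (move B x)
termination_by (Finset.univ \ T).card
decreasing_by
  rename_i h
  exact insert_measure_lt h.1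

/-- Invariant: `B` represents the Avoid True position `(F, T)`. -/
def Inv {V ι : Type*} [DecidableEq V] (F : Finset (Finset V)) (T : Finset V)
    (B : ι → V → Bool) : Prop :=
  (∀ i, (∀ x, B i x = false) ∨
      ∃ C ∈ F, C ∩ T = ∅ ∧ ∀ x, (B i x = true ↔ x ∉ C ∧ x ∉ T)) ∧
  (∀ C ∈ F, C ∩ T = ∅ → ∃ i : ι, ∀ x, (B i x = true ↔ x ∉ C ∧ x ∉ T))

lemma feas_iff_s12 {V ι : Type*} [DecidableEq V] {F : Finset (Finset V)} {T : Finset V}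
    {B : ι → V → Bool} (h : Inv F T B) (x : V) :
    atFeasible F T x ↔ Feasible B x := by
  constructor
  · rintro ⟨hx, C, hC, hCx⟩
    have hxC : x ∉ C := by
      intro hxc
      have := Finset.eq_empty_iff_forall_notMem.mp hCx x
      simp [hxc] at this
    have hCT : C ∩ T = ∅ := by
      apply Finset.eq_empty_iff_forall_notMem.mpr
      intro y hy
      have := Finset.eq_empty_iff_forall_notMem.mp hCx y
      simp only [Finset.mem_inter, Finset.mem_insert] at this hy
      exact this ⟨hy.1, Or.inr hy.2⟩
    obtain ⟨i, hi⟩ := h.2 C hC hCT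
    exact ⟨i, (hi x).mpr ⟨hxC, hx⟩⟩
  · rintro ⟨i, hi⟩
    rcases h.1 i with h0 | ⟨C, hC, hCT, hrow⟩
    · simp [h0 x] at hi
    · obtain ⟨hxC, hxT⟩ := (hrow x).mp hi
      refine ⟨hxT, C, hC, ?_⟩
      apply Finset.eq_empty_iff_forall_notMem.mpr
      intro y hy
      simp only [Finset.mem_inter, Finset.mem_insert] at hy
      rcases hy.2 with rfl | hyT
      · exact hxC hy.1
      · exact Finset.eq_empty_iff_forall_notMem.mp hCT y
          (Finset.mem_inter.mpr ⟨hy.1, hyT⟩)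

lemma inv_move {V ι : Type*} [DecidableEq V] {F : Finset (Finset V)} {T : Finset V}
    {B : ι → V → Bool} (h : Inv F T B) {x : V} (hx : atFeasible F T x) :
    Inv F (insert x T) (move B x) := by
  obtain ⟨hxT, -⟩ := hx
  constructor
  · intro i
    by_cases hBix : B i x = true
    · rcases h.1 i with h0 | ⟨C, hC, hCT, hrow⟩
      · simp [h0 x] at hBix
      · refine Or.inr ⟨C, hC, ?_, ?_⟩
        · apply Finset.eq_empty_iff_forall_notMem.mpr
          intro y hy
          simp only [Finset.mem_inter, Finset.mem_insert] at hy
          rcases hy.2 with rfl | hyT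
          · exact ((hrow y).mp hBix).1 hy.1
          · exact Finset.eq_empty_iff_forall_notMem.mp hCT y
              (Finset.mem_inter.mpr ⟨hy.1, hyT⟩)
        · intro y
          simp only [move, hBix]
          rw [if_neg (by simp)]
          by_cases hyx : y = x
          · subst hyx
            simp [((hrow y).mp hBix).1]
          · rw [if_neg hyx, hrow y]
            simp [Finset.mem_insert, hyx]
    · left
      intro y
      simp only [move]
      rw [if_pos (by simpa using hBix)]
  · intro C hC hCT
    have hxC : x ∉ C := by
      have := Finset.eq_empty_iff_forall_notMem.mp hCT x
      simp [Finset.mem_inter] at this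
      tauto
    have hCT' : C ∩ T = ∅ := by
      apply Finset.eq_empty_iff_forall_notMem.mpr
      intro y hy
      simp only [Finset.mem_inter] at hy
      exact Finset.eq_empty_iff_forall_notMem.mp hCT y
        (Finset.mem_inter.mpr ⟨hy.1, Finset.mem_insert_of_mem hy.2⟩)
    obtain ⟨i, hi⟩ := h.2 C hC hCT'
    have hBix : B i x = true := (hi x).mpr ⟨hxC, hxT⟩
    refine ⟨i, fun y => ?_⟩
    simp only [move, hBix]
    rw [if_neg (by simp)]
    by_cases hyx : y = x
    · subst hyx
      simp [hxC]
    · rw [if_neg hyx, hi y]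
      simp [Finset.mem_insert, hyx]

lemma main {V : Type*} [Fintype V] [DecidableEq V] :
    ∀ n (T : Finset V), (Finset.univ \ T).card = n →
      ∀ {ι : Type*} [Fintype ι] (F : Finset (Finset V)) (B : ι → V → Bool),
      Inv F T B →
      ATCAEq F T B ∧ atGrundy F T = grundy B ∧ (atFirstWins F T ↔ FirstWins B) := by
  intro n
  induction n using Nat.strong_induction_on with
  | _ n IH =>
    intro T hT ι _ F B hInv
    have key : ∀ x : V, atFeasible F T x →
        ATCAEq F (insert x T) (move B x) ∧
        atGrundy F (insert x T) = grundy (move B x) ∧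
        (atFirstWins F (insert x T) ↔ FirstWins (move B x)) := by
      intro x hx
      exact IH _ (hT ▸ insert_measure_lt hx.1) _ rfl F (move B x) (inv_move hInv hx)
    refine ⟨?_, ?_, ?_⟩
    · rw [ATCAEq]
      intro x
      exact ⟨feas_iff_s12 hInv x, fun hx => (key x hx).1⟩
    · have hset : (Finset.univ.filter fun x => atFeasible F T x)
          = (Finset.univ.filter fun j : V => Feasible B j) := by
        ext x
        simp [feas_iff_s12 hInv x]
      have him : ∀ {s : Finset V} (g : V → ℕ),
          s.attach.image (fun x : {a // a ∈ s} => g x.1) = s.image g := by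
        intro s g
        rw [show (fun x : {a // a ∈ s} => g x.1) = g ∘ Subtype.val from rfl,
          ← Finset.image_image, Finset.attach_image_val]
      rw [atGrundy, grundy,
        him (s := Finset.univ.filter fun x => atFeasible F T x)
          (fun x => atGrundy F (insert x T)),
        him (s := Finset.univ.filter fun j : V => Feasible B j)
          (fun j => grundy (move B j)), hset]
      congr 1
      apply Finset.image_congr
      intro x hx
      have hx' : atFeasible F T x := (feas_iff_s12 hInv x).mpr (Finset.mem_filter.mp hx).2
      exact (key x hx').2.1
    · rw [atFirstWins, FirstWins]
      constructor
      · rintro ⟨x, hx, hW⟩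
        exact ⟨x, (feas_iff_s12 hInv x).mp hx, fun hW' => hW (((key x hx).2.2).mpr hW')⟩
      · rintro ⟨x, hx, hW⟩
        have hx' := (feas_iff_s12 hInv x).mpr hx
        exact ⟨x, hx', fun hW' => hW (((key x hx').2.2).mp hW')⟩

/-- for an Avoid True position `(F, T)` over a finite variable set `V`, the
Avoid True game on `(F, T)` is isomorphic, via the move correspondence
`variable x ↔ column x`, to the Crosswise AND game on the matrix `B` whose rows are the
clauses `C ∈ F` with `C ∩ T = ∅` and whose columns are `V`, where `B[C, x] = false` iff
`x ∈ C` or `x ∈ T`; in particular the two games have the same Grundy value and the same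
outcome.  (Together with the converse reduction, Avoid True and Demi-Quantum Boolean Nim,
i.e. Crosswise AND / Transverse Wave, are isomorphic games.) -/
theorem stmt12 {V : Type*} [Fintype V] [DecidableEq V] (F : Finset (Finset V))
    (T : Finset V) :
    ATCAEq F T (fun (C : {C : Finset V // C ∈ F ∧ C ∩ T = ∅}) (x : V) =>
      if x ∈ C.1 ∨ x ∈ T then false else true) ∧
    atGrundy F T = grundy (fun (C : {C : Finset V // C ∈ F ∧ C ∩ T = ∅}) (x : V) =>
      if x ∈ C.1 ∨ x ∈ T then false else true) ∧
    (atFirstWins F T ↔ FirstWins (fun (C : {C : Finset V // C ∈ F ∧ C ∩ T = ∅}) (x : V) =>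
      if x ∈ C.1 ∨ x ∈ T then false else true)) := by
  have hInv : Inv F T (fun (C : {C : Finset V // C ∈ F ∧ C ∩ T = ∅}) (x : V) =>
      if x ∈ C.1 ∨ x ∈ T then false else true) := by
    refine ⟨fun i => Or.inr ⟨i.1, i.2.1, i.2.2, fun x => ?_⟩,
      fun C hC hCT => ⟨⟨C, hC, hCT⟩, fun x => ?_⟩⟩ <;>
    · simp only []
      split_ifs with h <;> simp <;> tauto
  exact main _ T rfl F _ hInv

end TW
end
end

section
/- Demographic Influence generalizes Demi-Quantum Nim: let A : Fin m → Fin n → ℕ be a Demi-Quantum Nim position with m realizations and n heaps. Define the Demographic Influence position Z' = (G, Θ, D) with vertex set V = Fin m × Fin n, where (r₁, c₁) and (r₂, c₂) are adjacent iff r₁ = r₂ and (r₁, c₁) ≠ (r₂, c₂) (each realization's vertices form a clique), Θ((r, c)) = A r c, and demographics D_c = { (r, c) : r ∈ Fin m } for each c ∈ Fin n. Then the Demi-Quantum Nim game on A is isomorphic (as a game tree, via the move correspondence (k, q) ↔ (D_k, q)) to the Demographic Influence game on Z'. -/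
/-!
A Demographic Influence position simulates the Demi-Quantum Nim position `A` as long as every
realization is either copied verbatim into `Θ` or has collapsed, in which case it is all zero in
`A` and all negative in `Θ`. Such a simulation has the same feasible moves, and it is preserved
by corresponding moves: a realization that survives the move `(k, q)` loses `q` in column `k` in
both games, and one that collapses has its vertex in column `k` drop below zero, which sets every
other vertex of its row-clique to `-1`. Induction on the total number of pebbles finishes.
-/

open scoped Classical

noncomputable section

namespace TW

variable {ι κ : Type*}

/-- A Demographic Influence move `(Dk, q)` is feasible if `q ≥ 1` and some member of the
demographic `Dk` has threshold at least `q`. -/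
def diFeasible {V : Type*} (Θ : V → ℤ) (Dk : Finset V) (q : ℕ) : Prop :=
  1 ≤ q ∧ ∃ v ∈ Dk, (q : ℤ) ≤ Θ v

/-- The Demographic Influence move `(Dk, q)`: first every member of `Dk` has its value
reduced by `q`; then every member of `Dk` whose value was `≥ 0` before the move and is
`< 0` after the subtraction sets the value of each of its neighbours in `G` to `-1`. -/
def diMove {V : Type*} (G : SimpleGraph V) (Dk : Finset V) (Θ : V → ℤ) (q : ℕ) :
    V → ℤ :=
  fun v =>
    if ∃ u ∈ Dk, 0 ≤ Θ u ∧ Θ u - q < 0 ∧ G.Adj u v then -1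
    else if v ∈ Dk then Θ v - q else Θ v

/-- A Demi-Quantum Nim move `(k, q)` (take `q ≥ 1` pebbles from heap `k`) is feasible if
some realization has at least `q` pebbles in heap `k`. -/
def dqFeasible {m n : ℕ} (A : Fin m → Fin n → ℕ) (k : Fin n) (q : ℕ) : Prop :=
  1 ≤ q ∧ ∃ r, q ≤ A r k

/-- The Demi-Quantum Nim move `(k, q)`: every realization with fewer than `q` pebbles in
heap `k` collapses (becomes the all-zero row), and every other realization has `q`
pebbles removed from heap `k`. -/
def dqMove {m n : ℕ} (A : Fin m → Fin n → ℕ) (k : Fin n) (q : ℕ) :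
    Fin m → Fin n → ℕ :=
  fun r c => if A r k < q then 0 else if c = k then A r k - q else A r c

theorem dq_measure_lt {m n : ℕ} {A : Fin m → Fin n → ℕ} {k : Fin n} {q : ℕ}
    (h : dqFeasible A k q) :
    (∑ p : Fin m × Fin n, dqMove A k q p.1 p.2) < ∑ p : Fin m × Fin n, A p.1 p.2 := by
  obtain ⟨hq, r, hr⟩ := h
  refine Finset.sum_lt_sum (fun p _ => ?_) ⟨(r, k), Finset.mem_univ _, ?_⟩
  · unfold dqMove
    split_ifs with h1 h2
    · exact Nat.zero_le _
    · rw [h2]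
      exact Nat.sub_le _ _
    · exact le_refl _
  · unfold dqMove
    simp only [if_neg (Nat.not_lt.mpr hr), if_pos rfl]
    exact Nat.sub_lt (by omega) (by omega)

/-- `DQDIEq G D A Θ` says that the Demi-Quantum Nim game on `A` and the Demographic
Influence game on `(G, Θ, D)` have isomorphic game trees via the move correspondence
`(k, q) ↔ (D k, q)`. -/
def DQDIEq {m n : ℕ} {V : Type*} (G : SimpleGraph V) (D : Fin n → Finset V)
    (A : Fin m → Fin n → ℕ) (Θ : V → ℤ) : Prop :=
  ∀ (k : Fin n) (q : ℕ), (dqFeasible A k q ↔ diFeasible Θ (D k) q) ∧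
    ∀ _ : dqFeasible A k q, DQDIEq G D (dqMove A k q) (diMove G (D k) Θ q)
termination_by ∑ p : Fin m × Fin n, A p.1 p.2
decreasing_by
  rename_i h
  exact dq_measure_lt h

/-- The graph in which the vertices of each realization (row) form a clique. -/
def rowGraph (m n : ℕ) : SimpleGraph (Fin m × Fin n) where
  Adj p p' := p.1 = p'.1 ∧ p ≠ p'
  symm := by
    constructor
    rintro p p' ⟨h1, h2⟩
    exact ⟨h1.symm, h2.symm⟩
  loopless := by
    constructor
    rintro p ⟨h1, h2⟩
    exact h2 rfl

/-- The demographic `D_k` of the reduction: column `k` of the position. -/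
abbrev column (m : ℕ) {n : ℕ} (k : Fin n) : Finset (Fin m × Fin n) :=
  Finset.univ.filter fun p : Fin m × Fin n => p.2 = k

theorem mem_column {m n : ℕ} {k : Fin n} {p : Fin m × Fin n} : p ∈ column m k ↔ p.2 = k := by
  simp

theorem diMove_rowGraph_column {m n : ℕ} (Θ : Fin m × Fin n → ℤ) (k : Fin n) (q : ℕ)
    (r : Fin m) (c : Fin n) :
    diMove (rowGraph m n) (column m k) Θ q (r, c) =
      if c ≠ k ∧ 0 ≤ Θ (r, k) ∧ Θ (r, k) < q then -1
      else if c = k then Θ (r, c) - q else Θ (r, c) := by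
  have trigger : (∃ u ∈ column m k, 0 ≤ Θ u ∧ Θ u - q < 0 ∧ (rowGraph m n).Adj u (r, c)) ↔
      c ≠ k ∧ 0 ≤ Θ (r, k) ∧ Θ (r, k) < q := by
    constructor
    · rintro ⟨⟨r', k'⟩, hu, h0, hlt, hr, hne⟩
      obtain rfl : r' = r := hr
      obtain rfl : k' = k := mem_column.mp hu
      exact ⟨fun hc => hne (by rw [hc]), h0, by omega⟩
    · rintro ⟨hc, h0, hlt⟩
      exact ⟨(r, k), mem_column.mpr rfl, h0, by omega, rfl, by simp [Ne.symm hc]⟩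
  dsimp only [diMove]
  rw [if_congr trigger rfl rfl]
  simp only [mem_column]

/-- The invariant of the simulation: every realization is either alive, with its heaps
copied into `Θ`, or collapsed, zero in `A` and negative in `Θ`. -/
def Represents {m n : ℕ} (A : Fin m → Fin n → ℕ) (Θ : Fin m × Fin n → ℤ) : Prop :=
  ∀ r, (∀ c, Θ (r, c) = A r c) ∨ (∀ c, Θ (r, c) < 0 ∧ A r c = 0)

theorem Represents.dqFeasible_iff {m n : ℕ} {A : Fin m → Fin n → ℕ} {Θ : Fin m × Fin n → ℤ}
    (h : Represents A Θ) (k : Fin n) (q : ℕ) :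
    dqFeasible A k q ↔ diFeasible Θ (column m k) q := by
  refine and_congr_right fun hq => ⟨?_, ?_⟩
  · rintro ⟨r, hr⟩
    refine ⟨(r, k), mem_column.mpr rfl, ?_⟩
    rcases h r with alive | dead
    · rw [alive k]
      exact_mod_cast hr
    · have := (dead k).2
      omega
  · rintro ⟨⟨r, c⟩, hv, hΘ⟩
    obtain rfl : c = k := mem_column.mp hv
    refine ⟨r, ?_⟩
    rcases h r with alive | dead
    · rw [alive c] at hΘ
      exact_mod_cast hΘ
    · have := (dead c).1
      omega

theorem Represents.dqMove {m n : ℕ} {A : Fin m → Fin n → ℕ} {Θ : Fin m × Fin n → ℤ}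
    (h : Represents A Θ) (k : Fin n) (q : ℕ) :
    Represents (dqMove A k q) (diMove (rowGraph m n) (column m k) Θ q) := by
  intro r
  simp only [diMove_rowGraph_column, TW.dqMove]
  rcases h r with alive | dead
  · simp only [alive]
    by_cases hk : A r k < q
    · right
      intro c
      rcases eq_or_ne c k with rfl | hc <;> constructor <;> split_ifs <;> omega
    · left
      intro c
      rcases eq_or_ne c k with rfl | hc <;> split_ifs <;>
        push_cast [Nat.cast_sub (not_lt.mp hk)] <;> omega
  · right
    intro c
    have dead_c := dead c
    have dead_k := dead k
    constructor <;> split_ifs <;> omega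

theorem dqdiEq_of_represents {m n : ℕ} (A : Fin m → Fin n → ℕ) (Θ : Fin m × Fin n → ℤ)
    (h : Represents A Θ) : DQDIEq (rowGraph m n) (column m) A Θ := by
  rw [DQDIEq]
  intro k q
  exact ⟨h.dqFeasible_iff k q, fun hfeas => dqdiEq_of_represents _ _ (h.dqMove k q)⟩
termination_by ∑ p : Fin m × Fin n, A p.1 p.2
decreasing_by exact dq_measure_lt hfeas

/-- Demographic Influence generalizes Demi-Quantum Nim.  For a Demi-Quantum
Nim position `A` with `m` realizations and `n` heaps, the Demi-Quantum Nim game on `A` is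
isomorphic, via the move correspondence `(k, q) ↔ (D_k, q)`, to the Demographic Influence
game on `Z' = (G, Θ, D)` where the vertex set is `Fin m × Fin n`, the vertices of each
realization form a clique, `Θ (r, c) = A r c`, and `D_c = {(r, c) : r ∈ Fin m}`. -/
theorem stmt13 {m n : ℕ} (A : Fin m → Fin n → ℕ) :
    DQDIEq (rowGraph m n)
      (fun k => Finset.univ.filter fun p : Fin m × Fin n => p.2 = k)
      A (fun p => (A p.1 p.2 : ℤ)) :=
  dqdiEq_of_represents A _ fun _ => Or.inl fun _ => rfl

end TW
end
end

section
/- Demographic Influence generalizes Friend Circle: let (G, S, w) be a Friend Circle position with G = (V, E). Define the Demographic Influence position Z' = (G', Θ, D) where G' is the line graph of G (vertices are the edges of G, with two vertices adjacent iff the corresponding edges of G share an endpoint); Θ(v_e) = 1 if w(e) = false and Θ(v_e) = 0 if w(e) = true; and D = { D_s : s ∈ S } where D_s = { v_e : e is incident to s }. Then Friend Circle on (G, S, w) is isomorphic (as a game tree, via the move correspondence s ↔ (D_s, 1)) to the Demographic Influence game on Z'. -/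
open scoped Classical

noncomputable section

namespace TW

variable {ι κ : Type*}

/-- The line graph of `G`: its vertices are the edges of `G`, two of them adjacent iff
they are distinct and share an endpoint. -/
def lineG {V : Type*} (G : SimpleGraph V) : SimpleGraph G.edgeSet where
  Adj e f := e ≠ f ∧ ∃ x : V, x ∈ (e : Sym2 V) ∧ x ∈ (f : Sym2 V)
  symm := by
    constructor
    rintro e f ⟨hne, x, hx1, hx2⟩
    exact ⟨hne.symm, x, hx2, hx1⟩
  loopless := by
    constructor
    rintro e ⟨hne, -⟩
    exact hne rfl

/-- `FCDIEq G S D w Θ` says that the Friend Circle game on `(G, S, w)` and the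
Demographic Influence game on `(lineG G, Θ, D)` have isomorphic game trees via the move
correspondence `s ↔ (D s, 1)`: the feasible Demographic Influence moves are exactly the
pairs `(D s, 1)` for feasible Friend Circle seeds `s`, and the move operations commute,
recursively. -/
def FCDIEq {V : Type*} [Fintype V] [DecidableEq V] (G : SimpleGraph V) (S : Finset V)
    (D : {s : V // s ∈ S} → Finset G.edgeSet)
    (w : Sym2 V → Bool) (Θ : G.edgeSet → ℤ) : Prop :=
  (∀ (s : {s : V // s ∈ S}) (q : ℕ),
      diFeasible Θ (D s) q ↔ (q = 1 ∧ fcFeasible G S w s.1)) ∧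
  ∀ s : {s : V // s ∈ S}, ∀ _ : fcFeasible G S w s.1,
    FCDIEq G S D (fcMove G w s.1) (diMove (lineG G) (D s) Θ 1)
termination_by (falseEdges G w).card
decreasing_by
  rename_i h
  exact falseEdges_fcMove_lt h

/-!
Encode a labelling by values on the line graph: false edges have value `1`, true edges a value
`≤ 0`. Playing `(D_s, 1)` lowers every edge at `s`; a true edge `(s, x)` of value `0` crosses
below zero and sets every edge at `x` to `-1`, exactly the spreading rule of Friend Circle, and
false edges at `s` drop to `0`, i.e. become true. A true edge `(s, x)` whose value is already
negative does not spread, so the invariant also demands that a negative edge have an endpoint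
all of whose edges are true; since `s` still has a false edge, that endpoint is `x`, and the
spreading at `x` changes nothing. This invariant is preserved by corresponding moves, it makes
the feasible moves correspond, and the game trees are then isomorphic by induction.
-/

section Encoding

variable {V : Type*} {G : SimpleGraph V}

section FriendCircle

variable {w : Sym2 V → Bool} {s x : V} {e : Sym2 V}

theorem fcMove_of_eq_true (h : w e = true) : fcMove G w s e = true := by
  unfold fcMove
  split_ifs <;> simp_all

theorem fcMove_of_mem (he : e ∈ G.edgeSet) (hs : s ∈ e) : fcMove G w s e = true := by
  simp [fcMove, he, hs]

theorem fcMove_of_adj (he : e ∈ G.edgeSet) (hx : x ∈ e) (hadj : G.Adj s x)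
    (hw : w s(s, x) = true) : fcMove G w s e = true := by
  simp only [fcMove, he, true_and, ite_eq_left_iff, not_or, not_exists, not_and]
  exact fun h => absurd hw (h.2 x hx hadj)

theorem fcMove_eq_self (hs : s ∉ e) (h : ∀ x ∈ e, G.Adj s x → w s(s, x) = true → w e = true) :
    fcMove G w s e = w e := by
  simp only [fcMove, hs, false_or, ite_eq_right_iff, and_imp, forall_exists_index]
  intro _ x hx hadj hw
  exact (h x hx hadj hw).symm

end FriendCircle

section DemographicInfluence

variable {W : Type*} {H : SimpleGraph W} {Dk : Finset W} {Θ : W → ℤ} {v : W}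

theorem diMove_nonpos_of_mem (hv : v ∈ Dk) (h : Θ v ≤ 1) : diMove H Dk Θ 1 v ≤ 0 := by
  unfold diMove
  split_ifs <;> omega

theorem diMove_one_of_not_mem (hv : v ∉ Dk) :
    diMove H Dk Θ 1 v = if ∃ u ∈ Dk, Θ u = 0 ∧ H.Adj u v then -1 else Θ v := by
  have crosses_zero : ∀ u, (0 ≤ Θ u ∧ Θ u - ((1 : ℕ) : ℤ) < 0) ↔ Θ u = 0 := by omega
  simp only [diMove, ← and_assoc, crosses_zero, hv, if_false]

end DemographicInfluence

def TouchesZeroEdgeAt (Θ : G.edgeSet → ℤ) (s : V) (e : G.edgeSet) : Prop :=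
  ∃ x ∈ (e : Sym2 V), ∃ hadj : G.Adj s x, Θ ⟨s(s, x), hadj⟩ = 0

section LineGraph

variable [Fintype V] [DecidableEq V]

def edgesAt (G : SimpleGraph V) (s : V) : Finset G.edgeSet :=
  Finset.univ.filter fun e => s ∈ (e : Sym2 V)

@[simp]
theorem mem_edgesAt {s : V} {e : G.edgeSet} : e ∈ edgesAt G s ↔ s ∈ (e : Sym2 V) := by
  simp [edgesAt]

theorem exists_mem_edgesAt_lineG_adj_iff {s : V} {e : G.edgeSet} (hs : s ∉ (e : Sym2 V))
    (P : G.edgeSet → Prop) :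
    (∃ u ∈ edgesAt G s, P u ∧ (lineG G).Adj u e) ↔
      ∃ x ∈ (e : Sym2 V), ∃ hadj : G.Adj s x, P ⟨s(s, x), hadj⟩ := by
  constructor
  · rintro ⟨u, hsu, hPu, -, x, hxu, hxe⟩
    have hxs : s ≠ x := by rintro rfl; exact hs hxe
    have hu : (u : Sym2 V) = s(s, x) := (Sym2.mem_and_mem_iff hxs).mp ⟨mem_edgesAt.mp hsu, hxu⟩
    have hadj : G.Adj s x := by simpa [hu] using u.2
    exact ⟨x, hxe, hadj, by convert hPu; exact Subtype.ext hu.symm⟩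
  · rintro ⟨x, hxe, hadj, hP⟩
    refine ⟨⟨s(s, x), hadj⟩, by simp, hP, ?_, x, Sym2.mem_mk_right s x, hxe⟩
    rintro rfl
    exact hs (Sym2.mem_mk_left s x)

theorem diMove_edgesAt_of_not_mem {Θ : G.edgeSet → ℤ} {s : V} {e : G.edgeSet}
    (hs : s ∉ (e : Sym2 V)) :
    diMove (lineG G) (edgesAt G s) Θ 1 e = if TouchesZeroEdgeAt Θ s e then -1 else Θ e := by
  rw [diMove_one_of_not_mem (by simpa using hs)]
  exact if_congr (exists_mem_edgesAt_lineG_adj_iff hs fun u => Θ u = 0) rfl rfl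

end LineGraph

structure IsEncoding (G : SimpleGraph V) (w : Sym2 V → Bool) (Θ : G.edgeSet → ℤ) : Prop where
  eq_one_of_false : ∀ e : G.edgeSet, w e = false → Θ e = 1
  nonpos_of_true : ∀ e : G.edgeSet, w e = true → Θ e ≤ 0
  saturated_of_neg : ∀ e : G.edgeSet, Θ e < 0 →
    ∃ z ∈ (e : Sym2 V), ∀ f : G.edgeSet, z ∈ (f : Sym2 V) → w f = true

namespace IsEncoding

variable {w : Sym2 V → Bool} {Θ : G.edgeSet → ℤ}

theorem of_labels (w : Sym2 V → Bool) : IsEncoding G w (fun e => if w e = false then 1 else 0) where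
  eq_one_of_false e he := by simp [he]
  nonpos_of_true e he := by simp [he]
  saturated_of_neg e he := by split_ifs at he <;> omega

theorem le_one (hΘ : IsEncoding G w Θ) (e : G.edgeSet) : Θ e ≤ 1 := by
  cases h : w e
  · exact (hΘ.eq_one_of_false e h).le
  · linarith [hΘ.nonpos_of_true e h]

theorem eq_true_of_eq_zero (hΘ : IsEncoding G w Θ) {e : G.edgeSet} (h : Θ e = 0) :
    w e = true := by
  by_contra hw
  simpa [h] using hΘ.eq_one_of_false e (by simpa using hw)

theorem eq_zero_or_saturated (hΘ : IsEncoding G w Θ) {s x : V}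
    (hs : ∃ y, G.Adj s y ∧ w s(s, y) = false) (hadj : G.Adj s x) (hw : w s(s, x) = true) :
    Θ ⟨s(s, x), hadj⟩ = 0 ∨ ∀ f : G.edgeSet, x ∈ (f : Sym2 V) → w f = true := by
  rcases (hΘ.nonpos_of_true ⟨s(s, x), hadj⟩ hw).lt_or_eq with hneg | h0
  · obtain ⟨z, hz, hall⟩ := hΘ.saturated_of_neg _ hneg
    rcases Sym2.mem_iff.mp hz with rfl | rfl
    · obtain ⟨y, hady, hwy⟩ := hs
      simp [hall ⟨s(z, y), hady⟩ (Sym2.mem_mk_left z y)] at hwy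
    · exact .inr hall
  · exact .inl h0

variable [Fintype V] [DecidableEq V]

theorem diFeasible_edgesAt_iff (hΘ : IsEncoding G w Θ) (s : V) (q : ℕ) :
    diFeasible Θ (edgesAt G s) q ↔ q = 1 ∧ ∃ x, G.Adj s x ∧ w s(s, x) = false := by
  constructor
  · rintro ⟨hq, e, hse, hqe⟩
    have hw : w e = false := by
      by_contra hw
      linarith [hΘ.nonpos_of_true e (by simpa using hw)]
    obtain ⟨x, hx⟩ := Sym2.mem_iff_exists.mp (mem_edgesAt.mp hse)
    have hadj : G.Adj s x := by simpa [hx] using e.2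
    exact ⟨by linarith [hΘ.le_one e], x, hadj, hx ▸ hw⟩
  · rintro ⟨rfl, x, hadj, hw⟩
    exact ⟨le_rfl, ⟨s(s, x), hadj⟩, by simp, (hΘ.eq_one_of_false _ hw).ge⟩

theorem fcMove_diMove (hΘ : IsEncoding G w Θ) {s : V}
    (hs : ∃ y, G.Adj s y ∧ w s(s, y) = false) :
    IsEncoding G (fcMove G w s) (diMove (lineG G) (edgesAt G s) Θ 1) := by
  have spread : ∀ e : G.edgeSet,
      TouchesZeroEdgeAt Θ s e → ∃ z ∈ (e : Sym2 V), ∀ f : G.edgeSet, z ∈ (f : Sym2 V) → fcMove G w s f = true := by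
    rintro e ⟨x, hxe, hadj, h0⟩
    exact ⟨x, hxe, fun f hxf => fcMove_of_adj f.2 hxf hadj (hΘ.eq_true_of_eq_zero h0)⟩
  have unchanged : ∀ e : G.edgeSet, s ∉ (e : Sym2 V) →
      ¬ TouchesZeroEdgeAt Θ s e → fcMove G w s e = w e := fun e hse hA =>
    fcMove_eq_self hse fun x hxe hadj hw =>
      (hΘ.eq_zero_or_saturated hs hadj hw).resolve_left (fun h0 => hA ⟨x, hxe, hadj, h0⟩) e hxe
  refine ⟨fun e he => ?_, fun e he => ?_, fun e he => ?_⟩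
  · have hse : s ∉ (e : Sym2 V) := fun h => by simp [fcMove_of_mem e.2 h] at he
    have hA : ¬ TouchesZeroEdgeAt Θ s e := fun hA => by
      obtain ⟨z, hz, hall⟩ := spread e hA
      simp [hall e hz] at he
    rw [diMove_edgesAt_of_not_mem hse, if_neg hA]
    exact hΘ.eq_one_of_false e (by rwa [← unchanged e hse hA])
  · by_cases hse : s ∈ (e : Sym2 V)
    · exact diMove_nonpos_of_mem (by simpa using hse) (hΘ.le_one e)
    rw [diMove_edgesAt_of_not_mem hse]
    split_ifs with hA
    · norm_num
    · exact hΘ.nonpos_of_true e (by rwa [← unchanged e hse hA])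
  · by_cases hse : s ∈ (e : Sym2 V)
    · exact ⟨s, hse, fun f hsf => fcMove_of_mem f.2 hsf⟩
    by_cases hA : TouchesZeroEdgeAt Θ s e
    · exact spread e hA
    rw [diMove_edgesAt_of_not_mem hse, if_neg hA] at he
    obtain ⟨z, hz, hall⟩ := hΘ.saturated_of_neg e he
    exact ⟨z, hz, fun f hzf => fcMove_of_eq_true (hall f hzf)⟩

theorem fcdiEq_edgesAt {w : Sym2 V → Bool} {Θ : G.edgeSet → ℤ} (S : Finset V)
    (hΘ : IsEncoding G w Θ) :
    FCDIEq G S (fun s => edgesAt G s.1) w Θ := by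
  rw [FCDIEq]
  refine ⟨fun s q => ?_, fun s hs => fcdiEq_edgesAt S (hΘ.fcMove_diMove hs.2)⟩
  rw [hΘ.diFeasible_edgesAt_iff, fcFeasible, and_iff_right s.2]
termination_by (falseEdges G w).card
decreasing_by exact falseEdges_fcMove_lt hs

end IsEncoding

end Encoding

/-- Demographic Influence generalizes Friend Circle.  For a Friend Circle
position `(G, S, w)`, the Friend Circle game is isomorphic, via the move correspondence
`s ↔ (D_s, 1)`, to the Demographic Influence game on `Z' = (G', Θ, D)` where `G'` is the
line graph of `G`, `Θ(v_e) = 1` if `w e = false` and `Θ(v_e) = 0` if `w e = true`, and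
`D_s = {v_e : e incident to s}` for `s ∈ S`. -/
theorem stmt15 {V : Type*} [Fintype V] [DecidableEq V] (G : SimpleGraph V)
    (S : Finset V) (w : Sym2 V → Bool) :
    FCDIEq G S
      (fun s => Finset.univ.filter fun e : G.edgeSet => s.1 ∈ (e : Sym2 V))
      w
      (fun e => if w e = false then 1 else 0) :=
  (IsEncoding.of_labels w).fcdiEq_edgesAt S

end TW
end
end
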